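/- Two irreducible undirected graphs on finite vertex sets have isomorphic associated lattices (as self-dual lattices, i.e. there is an order isomorphism between their lattices of closed sets commuting with the duality maps) if and only if their radicals are isomorphic as graphs. -/
import Mathlib


/-- The dual of a subset `X` of the vertex set: all vertices adjacent to every element of `X`. -/
def dual {V : Type*} (Adj : V → V → Prop) (X : Set V) : Set V := {y | ∀ x ∈ X, Adj x y}

/-- A subset is closed if it equals its double dual. -/
def Closed {V : Type*} (Adj : V → V → Prop) (X : Set V) : Prop := dual Adj (dual Adj X) = X

/-- The neighborhood of a vertex. -/
def nbhd {V : Type*} (Adj : V → V → Prop) (x : V) : Set V := {y | Adj x y}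

/-- A vertex is essential if its neighborhood is a completely meet-irreducible element of
the lattice of closed sets. -/
def Essential {V : Type*} (Adj : V → V → Prop) (x : V) : Prop :=
  ∀ F : Set (Set V), (∀ X ∈ F, Closed Adj X) → ⋂₀ F = nbhd Adj x → nbhd Adj x ∈ F
section Basics
variable {V : Type*} {Adj : V → V → Prop}

lemma dual_antitone {X Y : Set V} (h : X ⊆ Y) : dual Adj Y ⊆ dual Adj X :=
  fun _ hy x hx => hy x (h hx)

lemma subset_dualDual (hs : Symmetric Adj) (X : Set V) : X ⊆ dual Adj (dual Adj X) :=
  fun y hy _ ht => hs (ht y hy)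

lemma dual_dual_dual (hs : Symmetric Adj) (X : Set V) :
    dual Adj (dual Adj (dual Adj X)) = dual Adj X :=
  Set.Subset.antisymm (dual_antitone (subset_dualDual hs X)) (subset_dualDual hs (dual Adj X))

lemma closed_dual (hs : Symmetric Adj) (X : Set V) : Closed Adj (dual Adj X) :=
  dual_dual_dual hs X

lemma dual_singleton (x : V) : dual Adj {x} = nbhd Adj x := by
  ext y; simp [dual, nbhd]

lemma closed_nbhd (hs : Symmetric Adj) (x : V) : Closed Adj (nbhd Adj x) := by
  rw [← dual_singleton]; exact closed_dual hs _

lemma mem_dual_iff_subset_nbhd (hs : Symmetric Adj) {X : Set V} {x : V} :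
    x ∈ dual Adj X ↔ X ⊆ nbhd Adj x := by
  constructor
  · intro h y hy; exact hs (h y hy)
  · intro h y hy; exact hs (h hy)

lemma closed_sInter (hs : Symmetric Adj) {F : Set (Set V)} (hF : ∀ X ∈ F, Closed Adj X) :
    Closed Adj (⋂₀ F) := by
  refine Set.Subset.antisymm (fun y hy => ?_) (subset_dualDual hs _)
  intro X hX
  have h1 : dual Adj (dual Adj (⋂₀ F)) ⊆ dual Adj (dual Adj X) :=
    dual_antitone (dual_antitone (Set.sInter_subset_of_mem hX))
  have := h1 hy
  rwa [hF X hX] at this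

lemma adj_iff_dual_nbhd_subset (hs : Symmetric Adj) {x y : V} :
    Adj x y ↔ dual Adj (nbhd Adj x) ⊆ nbhd Adj y := by
  constructor
  · intro h
    rw [← dual_singleton (Adj := Adj) y]
    exact dual_antitone (fun t ht => by rcases ht with rfl; exact h)
  · intro h
    have hx : x ∈ dual Adj (nbhd Adj x) := fun t ht => hs ht
    exact hs (h hx)

lemma key_mem [Finite V] (hs : Symmetric Adj) (X : Set V) :
    Closed Adj X → ∀ v, (∀ x, Essential Adj x → X ⊆ nbhd Adj x → Adj x v) → v ∈ X := by
  refine (Finite.to_wellFoundedGT (α := Set V)).wf.induction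
    (C := fun X => Closed Adj X → ∀ v,
      (∀ x, Essential Adj x → X ⊆ nbhd Adj x → Adj x v) → v ∈ X) X ?_
  intro X IH hX v hv
  set F : Set (Set V) := {Y | Closed Adj Y ∧ X ⊂ Y} with hFdef
  by_cases hc : ⋂₀ F ⊆ X
  · apply hc
    intro Y hY
    exact IH Y hY.2 hY.1 v (fun x hx hsub => hv x hx (hY.2.subset.trans hsub))
  · obtain ⟨w, hwF, hwX⟩ := Set.not_subset.mp hc
    have hx0 : ∃ x ∈ dual Adj X, nbhd Adj x = X := by
      by_contra hno
      push_neg at hno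
      apply hwX
      have hw2 : w ∈ dual Adj (dual Adj X) := by
        intro x hx
        have hXsub : X ⊆ nbhd Adj x := (mem_dual_iff_subset_nbhd hs).mp hx
        have hmem : nbhd Adj x ∈ F :=
          ⟨closed_nbhd hs x, hXsub.ssubset_of_ne (hno x hx).symm⟩
        exact hwF _ hmem
      rwa [hX] at hw2
    obtain ⟨x₀, hx₀d, hx₀⟩ := hx0
    have hess : Essential Adj x₀ := by
      intro F' hF' hint
      rw [hx₀] at hint ⊢
      by_contra hnot
      apply hwX
      rw [← hint]
      intro Y hY
      have hXY : X ⊆ Y := by rw [← hint]; exact Set.sInter_subset_of_mem hY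
      have hne : X ≠ Y := fun h => hnot (h ▸ hY)
      exact hwF Y ⟨hF' Y hY, hXY.ssubset_of_ne hne⟩
    have hadj := hv x₀ hess ((mem_dual_iff_subset_nbhd hs).mp hx₀d)
    rw [← hx₀]
    exact hadj

lemma key [Finite V] (hs : Symmetric Adj) {X : Set V} (hX : Closed Adj X) :
    dual Adj ({x | Essential Adj x} ∩ dual Adj X) = X := by
  apply Set.Subset.antisymm
  · intro v hv
    exact key_mem hs X hX v
      (fun x hx hsub => hv x ⟨hx, (mem_dual_iff_subset_nbhd hs).mpr hsub⟩)
  · intro v hv x hx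
    exact hs (hx.2 v hv)

lemma keyDual [Finite V] (hs : Symmetric Adj) {Z : Set V} (hZ : Closed Adj Z) :
    dual Adj ({x | Essential Adj x} ∩ Z) = dual Adj Z := by
  have h := key hs (closed_dual hs Z)
  rwa [show dual Adj (dual Adj Z) = Z from hZ] at h

end Basics

section Transfer
variable {V₁ : Type*} {V₂ : Type*}
  {Adj₁ : V₁ → V₁ → Prop} {Adj₂ : V₂ → V₂ → Prop}

/-- Image of a set of vertices under an isomorphism of radicals. -/
def fS (e : {x : V₁ // Essential Adj₁ x} ≃ {x : V₂ // Essential Adj₂ x}) (S : Set V₁) :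
    Set V₂ :=
  Subtype.val '' (e '' (Subtype.val ⁻¹' S))

lemma mem_fS {e : {x : V₁ // Essential Adj₁ x} ≃ {x : V₂ // Essential Adj₂ x}}
    {S : Set V₁} {y : V₂} :
    y ∈ fS e S ↔ ∃ b : {x : V₁ // Essential Adj₁ x}, b.val ∈ S ∧ (e b).val = y := by
  constructor
  · rintro ⟨c, ⟨b, hb, rfl⟩, rfl⟩
    exact ⟨b, hb, rfl⟩
  · rintro ⟨b, hb, rfl⟩
    exact ⟨e b, ⟨b, hb, rfl⟩, rfl⟩

lemma fS_mono (e : {x : V₁ // Essential Adj₁ x} ≃ {x : V₂ // Essential Adj₂ x})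
    {S S' : Set V₁} (h : S ⊆ S') : fS e S ⊆ fS e S' := by
  intro y hy
  rw [mem_fS] at hy ⊢
  obtain ⟨b, hb, hby⟩ := hy
  exact ⟨b, h hb, hby⟩

lemma fS_inter (e : {x : V₁ // Essential Adj₁ x} ≃ {x : V₂ // Essential Adj₂ x})
    (S : Set V₁) : fS e ({x | Essential Adj₁ x} ∩ S) = fS e S := by
  ext y
  rw [mem_fS, mem_fS]
  constructor
  · rintro ⟨b, hb, hby⟩; exact ⟨b, hb.2, hby⟩
  · rintro ⟨b, hb, hby⟩; exact ⟨b, ⟨b.prop, hb⟩, hby⟩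

lemma gS_fS (e : {x : V₁ // Essential Adj₁ x} ≃ {x : V₂ // Essential Adj₂ x})
    (S : Set V₁) : fS e.symm (fS e S) = {x | Essential Adj₁ x} ∩ S := by
  ext x
  rw [mem_fS]
  constructor
  · rintro ⟨b₂, hb₂, rfl⟩
    rw [mem_fS] at hb₂
    obtain ⟨b₁, hb₁, hval⟩ := hb₂
    have : e b₁ = b₂ := Subtype.ext hval
    rw [← this, e.symm_apply_apply]
    exact ⟨b₁.prop, hb₁⟩
  · rintro ⟨hx, hxS⟩
    refine ⟨e ⟨x, hx⟩, ?_, by rw [e.symm_apply_apply]⟩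
    rw [mem_fS]
    exact ⟨⟨x, hx⟩, hxS, rfl⟩

lemma T_lemma (e : {x : V₁ // Essential Adj₁ x} ≃ {x : V₂ // Essential Adj₂ x})
    (he : ∀ a b : {x : V₁ // Essential Adj₁ x},
      Adj₁ a.val b.val ↔ Adj₂ (e a).val (e b).val) (S : Set V₁) :
    {y | Essential Adj₂ y} ∩ dual Adj₂ (fS e S) =
      fS e (dual Adj₁ ({x | Essential Adj₁ x} ∩ S)) := by
  ext y
  constructor
  · rintro ⟨hy, hyd⟩
    rw [mem_fS]
    refine ⟨e.symm ⟨y, hy⟩, ?_, by rw [e.apply_symm_apply]⟩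
    rintro x ⟨hx1, hx2⟩
    have := (he ⟨x, hx1⟩ (e.symm ⟨y, hy⟩))
    rw [e.apply_symm_apply] at this
    refine this.mpr (hyd _ ?_)
    rw [mem_fS]
    exact ⟨⟨x, hx1⟩, hx2, rfl⟩
  · intro hy
    rw [mem_fS] at hy
    obtain ⟨b, hb, rfl⟩ := hy
    refine ⟨(e b).prop, ?_⟩
    rintro t ht
    rw [mem_fS] at ht
    obtain ⟨a, ha, rfl⟩ := ht
    exact (he a b).mp (hb a.val ⟨a.prop, ha⟩)

variable [Finite V₁] [Finite V₂]

lemma step1 (hs₁ : Symmetric Adj₁)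
    (e : {x : V₁ // Essential Adj₁ x} ≃ {x : V₂ // Essential Adj₂ x})
    (he : ∀ a b : {x : V₁ // Essential Adj₁ x},
      Adj₁ a.val b.val ↔ Adj₂ (e a).val (e b).val) {X : Set V₁} (hX : Closed Adj₁ X) :
    {y | Essential Adj₂ y} ∩ dual Adj₂ (fS e (dual Adj₁ X)) = fS e X := by
  rw [T_lemma e he, keyDual hs₁ (closed_dual hs₁ X),
    show dual Adj₁ (dual Adj₁ X) = X from hX]

lemma duality_comm (hs₁ : Symmetric Adj₁) (hs₂ : Symmetric Adj₂)
    (e : {x : V₁ // Essential Adj₁ x} ≃ {x : V₂ // Essential Adj₂ x})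
    (he : ∀ a b : {x : V₁ // Essential Adj₁ x},
      Adj₁ a.val b.val ↔ Adj₂ (e a).val (e b).val) {X : Set V₁} (hX : Closed Adj₁ X) :
    dual Adj₂ (dual Adj₂ (fS e (dual Adj₁ X))) = dual Adj₂ (fS e X) := by
  have h := keyDual hs₂ (closed_dual hs₂ (fS e (dual Adj₁ X)))
  rw [step1 hs₁ e he hX] at h
  exact h.symm

lemma left_inv_lemma (hs₁ : Symmetric Adj₁) (hs₂ : Symmetric Adj₂)
    (e : {x : V₁ // Essential Adj₁ x} ≃ {x : V₂ // Essential Adj₂ x})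
    (he : ∀ a b : {x : V₁ // Essential Adj₁ x},
      Adj₁ a.val b.val ↔ Adj₂ (e a).val (e b).val) {X : Set V₁} (hX : Closed Adj₁ X) :
    dual Adj₁ (fS e.symm (dual Adj₂ (dual Adj₂ (fS e (dual Adj₁ X))))) = X := by
  rw [duality_comm hs₁ hs₂ e he hX]
  have h1 : {y | Essential Adj₂ y} ∩ dual Adj₂ (fS e X) = fS e (dual Adj₁ X) := by
    have := step1 hs₁ e he (closed_dual hs₁ X)
    rwa [show dual Adj₁ (dual Adj₁ X) = X from hX] at this
  rw [← fS_inter e.symm, h1, gS_fS, keyDual hs₁ (closed_dual hs₁ X),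
    show dual Adj₁ (dual Adj₁ X) = X from hX]

end Transfer

section MP
variable {V₁ : Type*} {V₂ : Type*}
  {Adj₁ : V₁ → V₁ → Prop} {Adj₂ : V₂ → V₂ → Prop}

lemma orderIso_symm_dual_comm (hs₁ : Symmetric Adj₁)
    (φ : {X : Set V₁ // Closed Adj₁ X} ≃o {X : Set V₂ // Closed Adj₂ X})
    (hφ : ∀ X Y : {X : Set V₁ // Closed Adj₁ X},
      Y.val = dual Adj₁ X.val → (φ Y).val = dual Adj₂ (φ X).val) :
    ∀ X Y : {X : Set V₂ // Closed Adj₂ X},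
      Y.val = dual Adj₂ X.val → (φ.symm Y).val = dual Adj₁ (φ.symm X).val := by
  intro X Y hYX
  set X' := φ.symm X with hX'
  have hstep := hφ X' ⟨dual Adj₁ X'.val, closed_dual hs₁ _⟩ rfl
  rw [show φ X' = X from φ.apply_symm_apply X] at hstep
  have hYeq : φ (⟨dual Adj₁ X'.val, closed_dual hs₁ _⟩ :
      {X : Set V₁ // Closed Adj₁ X}) = Y := Subtype.ext (hstep.trans hYX.symm)
  rw [← hYeq, φ.symm_apply_apply]

lemma orderIso_sInter (hs₂ : Symmetric Adj₂)
    (φ : {X : Set V₁ // Closed Adj₁ X} ≃o {X : Set V₂ // Closed Adj₂ X})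
    {F : Set (Set V₁)} (hF : ∀ Y ∈ F, Closed Adj₁ Y) {Z : Set V₁} (hZ : Closed Adj₁ Z)
    (h : ⋂₀ F = Z) :
    ⋂₀ {W | ∃ Y, ∃ hY : Y ∈ F, W = (φ ⟨Y, hF Y hY⟩).val} = (φ ⟨Z, hZ⟩).val := by
  apply Set.Subset.antisymm
  · set G := {W | ∃ Y, ∃ hY : Y ∈ F, W = (φ ⟨Y, hF Y hY⟩).val} with hG
    have hGc : ∀ W ∈ G, Closed Adj₂ W := by rintro W ⟨Y, hY, rfl⟩; exact (φ _).prop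
    have hIc : Closed Adj₂ (⋂₀ G) := closed_sInter hs₂ hGc
    set Wp := φ.symm ⟨⋂₀ G, hIc⟩ with hWp
    have hW : Wp ≤ ⟨Z, hZ⟩ := by
      have hsub : Wp.val ⊆ Z := by
        rw [← h]
        intro v hv
        refine Set.mem_sInter.mpr (fun Y hY => ?_)
        have hle : (⟨⋂₀ G, hIc⟩ : {X : Set V₂ // Closed Adj₂ X}) ≤ φ ⟨Y, hF Y hY⟩ :=
          Subtype.mk_le_mk.mpr (Set.sInter_subset_of_mem ⟨Y, hY, rfl⟩)
        have h2 : Wp ≤ ⟨Y, hF Y hY⟩ := by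
          rw [hWp, ← φ.symm_apply_apply ⟨Y, hF Y hY⟩]
          exact φ.symm.monotone hle
        exact Subtype.coe_le_coe.mpr h2 hv
      exact Subtype.coe_le_coe.mp hsub
    have hfin : φ Wp ≤ φ ⟨Z, hZ⟩ := φ.monotone hW
    rw [hWp, φ.apply_symm_apply] at hfin
    exact Subtype.coe_le_coe.mpr hfin
  · intro v hv
    refine Set.mem_sInter.mpr ?_
    rintro W ⟨Y, hY, rfl⟩
    have hle : (⟨Z, hZ⟩ : {X : Set V₁ // Closed Adj₁ X}) ≤ ⟨Y, hF Y hY⟩ :=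
      Subtype.mk_le_mk.mpr (by rw [← h]; exact Set.sInter_subset_of_mem hY)
    exact Subtype.coe_le_coe.mpr (φ.monotone hle) hv

variable [Finite V₂]

lemma cmi_transfer (hs₁ : Symmetric Adj₁) (hs₂ : Symmetric Adj₂)
    (φ : {X : Set V₁ // Closed Adj₁ X} ≃o {X : Set V₂ // Closed Adj₂ X})
    (x : V₁) (hx : Essential Adj₁ x) :
    ∃ y, Essential Adj₂ y ∧ (φ ⟨nbhd Adj₁ x, closed_nbhd hs₁ x⟩).val = nbhd Adj₂ y := by
  set N := φ ⟨nbhd Adj₁ x, closed_nbhd hs₁ x⟩ with hN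
  have hCMI : ∀ F₂ : Set (Set V₂), (∀ Y ∈ F₂, Closed Adj₂ Y) → ⋂₀ F₂ = N.val →
      N.val ∈ F₂ := by
    intro F₂ h2 hI
    have hpull := orderIso_sInter hs₁ φ.symm h2 N.prop hI
    have hrw : (φ.symm ⟨N.val, N.prop⟩ : {X : Set V₁ // Closed Adj₁ X}).val
        = nbhd Adj₁ x := by
      rw [show (⟨N.val, N.prop⟩ : {X : Set V₂ // Closed Adj₂ X}) = N from rfl, hN,
        φ.symm_apply_apply]
    rw [hrw] at hpull
    have hmem := hx _ (by rintro U ⟨Y, hY, rfl⟩; exact (φ.symm _).prop) hpull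
    obtain ⟨Y, hY, hEq⟩ := hmem
    have hsub : (⟨nbhd Adj₁ x, closed_nbhd hs₁ x⟩ : {X : Set V₁ // Closed Adj₁ X})
        = φ.symm ⟨Y, h2 Y hY⟩ := Subtype.ext hEq
    have : N = ⟨Y, h2 Y hY⟩ := by rw [hN, hsub, φ.apply_symm_apply]
    rw [show N.val = Y from congrArg Subtype.val this]
    exact hY
  set G := {W | ∃ y, (Essential Adj₂ y ∧ N.val ⊆ nbhd Adj₂ y) ∧ W = nbhd Adj₂ y} with hG
  have hGc : ∀ W ∈ G, Closed Adj₂ W := by rintro W ⟨y, _, rfl⟩; exact closed_nbhd hs₂ y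
  have hGi : ⋂₀ G = N.val := by
    have hk := key hs₂ N.prop
    rw [← hk]
    ext v
    constructor
    · intro hv t ht
      have h1 : N.val ⊆ nbhd Adj₂ t := (mem_dual_iff_subset_nbhd hs₂).mp ht.2
      exact Set.mem_sInter.mp hv _ ⟨t, ⟨ht.1, h1⟩, rfl⟩
    · intro hv
      refine Set.mem_sInter.mpr ?_
      rintro W ⟨y, ⟨hy1, hy2⟩, rfl⟩
      exact hv y ⟨hy1, (mem_dual_iff_subset_nbhd hs₂).mpr hy2⟩
  obtain ⟨y, ⟨hyE, _⟩, hyW⟩ := hCMI G hGc hGi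
  exact ⟨y, hyE, hyW⟩

end MP

theorem stmt_18 {V₁ V₂ : Type*} [Fintype V₁] [Fintype V₂]
    (Adj₁ : V₁ → V₁ → Prop) (Adj₂ : V₂ → V₂ → Prop)
    (hs₁ : Symmetric Adj₁) (hs₂ : Symmetric Adj₂)
    (hirr₁ : ∀ x y : V₁, nbhd Adj₁ x = nbhd Adj₁ y → x = y)
    (hirr₂ : ∀ x y : V₂, nbhd Adj₂ x = nbhd Adj₂ y → x = y) :
    (∃ φ : {X : Set V₁ // Closed Adj₁ X} ≃o {X : Set V₂ // Closed Adj₂ X},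
      ∀ X Y : {X : Set V₁ // Closed Adj₁ X},
        Y.val = dual Adj₁ X.val → (φ Y).val = dual Adj₂ (φ X).val) ↔
    (∃ e : {x : V₁ // Essential Adj₁ x} ≃ {x : V₂ // Essential Adj₂ x},
      ∀ a b : {x : V₁ // Essential Adj₁ x},
        Adj₁ a.val b.val ↔ Adj₂ (e a).val (e b).val) := by
  constructor
  · rintro ⟨φ, hφ⟩
    choose f hf1 hf2 using fun a : {x : V₁ // Essential Adj₁ x} =>
      cmi_transfer hs₁ hs₂ φ a.val a.prop
    choose g hg1 hg2 using fun b : {y : V₂ // Essential Adj₂ y} =>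
      cmi_transfer hs₂ hs₁ φ.symm b.val b.prop
    have left : ∀ a : {x : V₁ // Essential Adj₁ x}, g ⟨f a, hf1 a⟩ = a.val := by
      intro a
      apply hirr₁
      rw [← hg2 ⟨f a, hf1 a⟩]
      have h1 : (⟨nbhd Adj₂ (f a), closed_nbhd hs₂ (f a)⟩ :
          {X : Set V₂ // Closed Adj₂ X}) = φ ⟨nbhd Adj₁ a.val, closed_nbhd hs₁ a.val⟩ :=
        Subtype.ext (hf2 a).symm
      rw [show (⟨nbhd Adj₂ (⟨f a, hf1 a⟩ : {y : V₂ // Essential Adj₂ y}).val,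
          closed_nbhd hs₂ _⟩ : {X : Set V₂ // Closed Adj₂ X})
          = φ ⟨nbhd Adj₁ a.val, closed_nbhd hs₁ a.val⟩ from h1, φ.symm_apply_apply]
    have right : ∀ b : {y : V₂ // Essential Adj₂ y}, f ⟨g b, hg1 b⟩ = b.val := by
      intro b
      apply hirr₂
      rw [← hf2 ⟨g b, hg1 b⟩]
      have h1 : (⟨nbhd Adj₁ (g b), closed_nbhd hs₁ (g b)⟩ :
          {X : Set V₁ // Closed Adj₁ X}) = φ.symm ⟨nbhd Adj₂ b.val, closed_nbhd hs₂ b.val⟩ :=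
        Subtype.ext (hg2 b).symm
      rw [show (⟨nbhd Adj₁ (⟨g b, hg1 b⟩ : {x : V₁ // Essential Adj₁ x}).val,
          closed_nbhd hs₁ _⟩ : {X : Set V₁ // Closed Adj₁ X})
          = φ.symm ⟨nbhd Adj₂ b.val, closed_nbhd hs₂ b.val⟩ from h1, φ.apply_symm_apply]
    refine ⟨⟨fun a => ⟨f a, hf1 a⟩, fun b => ⟨g b, hg1 b⟩,
      fun a => Subtype.ext (left a), fun b => Subtype.ext (right b)⟩, ?_⟩
    intro a b
    simp only [Equiv.coe_fn_mk]
    rw [adj_iff_dual_nbhd_subset hs₁, adj_iff_dual_nbhd_subset hs₂]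
    have hdual : (φ ⟨dual Adj₁ (nbhd Adj₁ a.val), closed_dual hs₁ _⟩).val
        = dual Adj₂ (nbhd Adj₂ (f a)) := by
      rw [hφ ⟨nbhd Adj₁ a.val, closed_nbhd hs₁ a.val⟩
        ⟨dual Adj₁ (nbhd Adj₁ a.val), closed_dual hs₁ _⟩ rfl, hf2 a]
    constructor
    · intro h
      have hle : (⟨dual Adj₁ (nbhd Adj₁ a.val), closed_dual hs₁ _⟩ :
          {X : Set V₁ // Closed Adj₁ X}) ≤ ⟨nbhd Adj₁ b.val, closed_nbhd hs₁ b.val⟩ :=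
        Subtype.mk_le_mk.mpr h
      have h2 := Subtype.coe_le_coe.mpr (φ.monotone hle)
      rwa [hdual, hf2 b] at h2
    · intro h
      have h2 : (φ ⟨dual Adj₁ (nbhd Adj₁ a.val), closed_dual hs₁ _⟩)
          ≤ φ ⟨nbhd Adj₁ b.val, closed_nbhd hs₁ b.val⟩ :=
        Subtype.coe_le_coe.mp (by rw [hdual, hf2 b]; exact h)
      exact Subtype.coe_le_coe.mpr (φ.le_iff_le.mp h2)
  · rintro ⟨e, he⟩
    have he' : ∀ a b : {y : V₂ // Essential Adj₂ y},
        Adj₂ a.val b.val ↔ Adj₁ (e.symm a).val (e.symm b).val := by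
      intro a b
      have := he (e.symm a) (e.symm b)
      rw [e.apply_symm_apply, e.apply_symm_apply] at this
      exact this.symm
    refine ⟨⟨⟨fun X => ⟨dual Adj₂ (fS e (dual Adj₁ X.val)), closed_dual hs₂ _⟩,
      fun Y => ⟨dual Adj₁ (fS e.symm (dual Adj₂ Y.val)), closed_dual hs₁ _⟩, ?_, ?_⟩, ?_⟩, ?_⟩
    · intro X
      exact Subtype.ext (left_inv_lemma hs₁ hs₂ e he X.prop)
    · intro Y
      apply Subtype.ext
      have := left_inv_lemma hs₂ hs₁ e.symm he' Y.prop
      rwa [Equiv.symm_symm] at this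
    · intro X Y
      simp only [Equiv.coe_fn_mk]
      constructor
      · intro h
        have h0 : dual Adj₂ (fS e (dual Adj₁ X.val)) ⊆ dual Adj₂ (fS e (dual Adj₁ Y.val)) :=
          Subtype.mk_le_mk.mp h
        have ha : dual Adj₂ (dual Adj₂ (fS e (dual Adj₁ Y.val)))
            ⊆ dual Adj₂ (dual Adj₂ (fS e (dual Adj₁ X.val))) := dual_antitone h0
        have h1 := dual_antitone (Adj := Adj₁) (fS_mono e.symm ha)
        rw [left_inv_lemma hs₁ hs₂ e he X.prop, left_inv_lemma hs₁ hs₂ e he Y.prop] at h1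
        exact Subtype.coe_le_coe.mp h1
      · intro h
        exact Subtype.mk_le_mk.mpr (dual_antitone (fS_mono e (dual_antitone
          (Subtype.coe_le_coe.mpr h))))
    · intro X Y hYX
      show dual Adj₂ (fS e (dual Adj₁ Y.val)) = dual Adj₂ (dual Adj₂ (fS e (dual Adj₁ X.val)))
      rw [hYX, show dual Adj₁ (dual Adj₁ X.val) = X.val from X.prop]
      exact (duality_comm hs₁ hs₂ e he X.prop).symm
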